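/- arXiv:2101.05621 — 2 statements merged into one kernel-verified Lean document; each statement's English description precedes it below -/
import Mathlib

section
/- Let ρ₁, ρ₂, ρ₃ be real numbers with 0 ≤ ρ₁ ≤ ρ₂ ≤ ρ₃. Then 6(ρ₁³+ρ₂³+ρ₃³) − 5(ρ₁+ρ₂+ρ₃)(ρ₁²+ρ₂²+ρ₃²) + (ρ₁+ρ₂+ρ₃)³ ≥ 0. -/
/-! With `p = ρ₁ + ρ₂ + ρ₃`, `q = ρ₁ρ₂ + ρ₂ρ₃ + ρ₃ρ₁` and `r = ρ₁ρ₂ρ₃` the expression is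
`2 (p³ - 4pq + 9r)`, and `p³ - 4pq + 9r` is the sum in Schur's inequality with exponent `1`. -/

theorem schur_of_le {R : Type*} [CommRing R] [LinearOrder R] [IsStrictOrderedRing R]
    {a b c : R} (ha : 0 ≤ a) (hab : a ≤ b) (hbc : b ≤ c) :
    0 ≤ a * (a - b) * (a - c) + b * (b - a) * (b - c) + c * (c - a) * (c - b) := by
  have h_bottom : 0 ≤ a * (a - b) * (a - c) :=
    mul_nonneg_of_nonpos_of_nonpos (mul_nonpos_of_nonneg_of_nonpos ha (sub_nonpos.2 hab))
      (sub_nonpos.2 (hab.trans hbc))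
  have h_le : b * (b - a) ≤ c * (c - a) :=
    mul_le_mul hbc (sub_le_sub_right hbc a) (sub_nonneg.2 hab) ((ha.trans hab).trans hbc)
  have h_top : 0 ≤ b * (b - a) * (b - c) + c * (c - a) * (c - b) :=
    calc 0 ≤ (c - b) * (c * (c - a) - b * (b - a)) :=
          mul_nonneg (sub_nonneg.2 hbc) (sub_nonneg.2 h_le)
      _ = b * (b - a) * (b - c) + c * (c - a) * (c - b) := by ring
  linarith

/-- Algebraic core of Lemma 2.4: for ordered nonnegative Ricci eigenvalues
`ρ₁ ≤ ρ₂ ≤ ρ₃`, the expression `6∑ρᵢ³ − 5R·|Ric|² + R³` is nonnegative. -/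
theorem stmt_0 (ρ₁ ρ₂ ρ₃ : ℝ) (h₀ : 0 ≤ ρ₁) (h₁ : ρ₁ ≤ ρ₂) (h₂ : ρ₂ ≤ ρ₃) :
    6 * (ρ₁ ^ 3 + ρ₂ ^ 3 + ρ₃ ^ 3)
      - 5 * (ρ₁ + ρ₂ + ρ₃) * (ρ₁ ^ 2 + ρ₂ ^ 2 + ρ₃ ^ 2)
      + (ρ₁ + ρ₂ + ρ₃) ^ 3 ≥ 0 := by
  linear_combination 2 * schur_of_le h₀ h₁ h₂
end

section
/- Let (M³,g,f̃) be a compact oriented 3-manifold without boundary with f̃ satisfying the CPE equation −(Δf̃)g + Hess f̃ − f̃ Ric = Ric − (R/3)g. Then ∫_M (1+f̃)|Ric − (R/3)g|² dV = 0. -/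
/-
The CPE equation says that `Hess f̃ = (1 + f̃) R̊ic + μ g` for some function
`μ`, so pairing with the trace-free `R̊ic` gives `⟨Hess f̃, R̊ic⟩ = (1 + f̃)|R̊ic|²`. On the other hand
`⟨Hess f̃, R̊ic⟩` is the divergence of the vector field `R̊ic(∇f̃, ·)` up to the term
`⟨∇f̃, div R̊ic⟩`, which vanishes by the contracted Bianchi identity since `R` is constant.
Integrating over the closed manifold kills the divergence.
-/

open Finset

def kd (i j : Fin 3) : ℝ := if i = j then 1 else 0

/-- Covariant derivative of a (0,2)-tensor field in a local orthonormal frame. -/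
def cov2 {M : Type*} (d : (M → ℝ) → Fin 3 → M → ℝ)
    (Γ : M → Fin 3 → Fin 3 → Fin 3 → ℝ)
    (T : M → Fin 3 → Fin 3 → ℝ) (k i j : Fin 3) (x : M) : ℝ :=
  d (fun y => T y i j) k x - (∑ m, Γ x k i m * T x m j)
    - (∑ m, Γ x k j m * T x i m)

/-- Covariant divergence of a vector field in the frame. -/
def divg {M : Type*} (d : (M → ℝ) → Fin 3 → M → ℝ)
    (Γ : M → Fin 3 → Fin 3 → Fin 3 → ℝ) (X : M → Fin 3 → ℝ) (x : M) : ℝ :=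
  ∑ k, (d (fun y => X y k) k x - ∑ m, Γ x k k m * X x m)

/-- Hessian components `f_{,ij}` in the frame. -/
def hess {M : Type*} (d : (M → ℝ) → Fin 3 → M → ℝ)
    (Γ : M → Fin 3 → Fin 3 → Fin 3 → ℝ) (f : M → ℝ) (i j : Fin 3) (x : M) : ℝ :=
  d (fun y => d f i y) j x - ∑ m, Γ x j i m * d f m x

section Derivation

variable {M : Type*} {d : (M → ℝ) → Fin 3 → M → ℝ}

theorem d_const_mul (d_mul : ∀ (f g : M → ℝ) k x,
      d (fun y => f y * g y) k x = d f k x * g x + f x * d g k x)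
    (d_const : ∀ (c : ℝ) k x, d (fun _ => c) k x = 0)
    (c : ℝ) (g : M → ℝ) (k : Fin 3) (x : M) :
    d (fun y => c * g y) k x = c * d g k x := by
  simpa [d_const] using d_mul (fun _ => c) g k x

theorem d_sub (d_add : ∀ (f g : M → ℝ) k x,
      d (fun y => f y + g y) k x = d f k x + d g k x)
    (g h : M → ℝ) (k : Fin 3) (x : M) :
    d (fun y => g y - h y) k x = d g k x - d h k x := by
  have := d_add (fun y => g y - h y) h k x
  simp only [sub_add_cancel] at this
  linarith

theorem divg_contract_grad
    (d_add : ∀ (f g : M → ℝ) k x,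
      d (fun y => f y + g y) k x = d f k x + d g k x)
    (d_mul : ∀ (f g : M → ℝ) k x,
      d (fun y => f y * g y) k x = d f k x * g x + f x * d g k x)
    (d_const : ∀ (c : ℝ) k x, d (fun _ => c) k x = 0)
    {Γ : M → Fin 3 → Fin 3 → Fin 3 → ℝ} (hΓ : ∀ x k i m, Γ x k i m = - Γ x k m i)
    (f : M → ℝ) (T : M → Fin 3 → Fin 3 → ℝ) (c : ℝ) (x : M) :
    divg d Γ (fun y j => (∑ i, d f i y * T y i j) - c * d f j y) x
      = (∑ i, ∑ j, hess d Γ f i j x * (T x i j - c * kd i j))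
        + ∑ i, d f i x * ∑ j, cov2 d Γ T j i j x := by
  -- metric compatibility: the connection terms cancel because `Γ x k` is skew
  have hdiag : ∀ k i, Γ x k i i = 0 := fun k i => by linarith [hΓ x k i i]
  have h10 : ∀ k, Γ x k 1 0 = -Γ x k 0 1 := fun k => hΓ x k 1 0
  have h20 : ∀ k, Γ x k 2 0 = -Γ x k 0 2 := fun k => hΓ x k 2 0
  have h21 : ∀ k, Γ x k 2 1 = -Γ x k 1 2 := fun k => hΓ x k 2 1
  simp only [divg, hess, cov2, Fin.sum_univ_three, kd, Fin.reduceEq, reduceIte,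
    d_sub d_add, d_const_mul d_mul d_const, d_add, d_mul, hdiag, h10, h20, h21]
  ring

end Derivation

theorem sum_kd_mul (E : Fin 3 → Fin 3 → ℝ) : ∑ i, ∑ j, kd i j * E i j = ∑ i, E i i := by
  simp [kd]

theorem sum_mul_eq_of_eq_smul_add_kd {H E : Fin 3 → Fin 3 → ℝ} {a μ : ℝ}
    (hH : ∀ i j, H i j = a * E i j + μ * kd i j) (hE : ∑ i, E i i = 0) :
    ∑ i, ∑ j, H i j * E i j = a * ∑ i, ∑ j, E i j ^ 2 := by
  have hsplit : ∀ i j, H i j * E i j = a * E i j ^ 2 + μ * (kd i j * E i j) := fun i j => by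
    rw [hH]; ring
  simp only [hsplit, sum_add_distrib, ← mul_sum, sum_kd_mul, hE, mul_zero, add_zero]

theorem sum_sub_kd_of_trace_eq {T : Fin 3 → Fin 3 → ℝ} {R : ℝ} (hR : ∑ i, T i i = R) :
    ∑ i, (T i i - R / 3 * kd i i) = 0 := by
  simp only [kd, if_true, mul_one, sum_sub_distrib, hR, sum_const, card_univ, Fintype.card_fin]
  ring

theorem sum_hess_mul_traceless_of_cpe {M : Type*} {d : (M → ℝ) → Fin 3 → M → ℝ}
    {Γ : M → Fin 3 → Fin 3 → Fin 3 → ℝ} {f : M → ℝ} {Ric : M → Fin 3 → Fin 3 → ℝ} {R : ℝ}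
    {x : M} (hR : ∑ i, Ric x i i = R)
    (hCPE : ∀ i j,
      -(∑ k, hess d Γ f k k x) * kd i j + hess d Γ f i j x - f x * Ric x i j
        = Ric x i j - (R / 3) * kd i j) :
    ∑ i, ∑ j, hess d Γ f i j x * (Ric x i j - (R / 3) * kd i j)
      = (1 + f x) * ∑ i, ∑ j, (Ric x i j - (R / 3) * kd i j) ^ 2 := by
  -- the CPE equation rearranged: `Hess f = (1 + f) R̊ic + (Δf + f R / 3) g`
  refine sum_mul_eq_of_eq_smul_add_kd (μ := ∑ k, hess d Γ f k k x + f x * R / 3)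
    (fun i j => ?_) (sum_sub_kd_of_trace_eq hR)
  linear_combination hCPE i j

/-- The closed manifold is modelled by a point set `M`, a volume integral `vol` annihilating
divergences (the divergence theorem on a closed manifold), and a local orthonormal frame
derivation `d` with metric connection coefficients `Γ`. `hbianchi` is the contracted second
Bianchi identity `∑_j R_{ij,j} = (1/2)R_{,i} = 0` for the constant scalar curvature `R`. -/
theorem stmt_16_general {M : Type*}
    (vol : (M → ℝ) → ℝ)
    (d : (M → ℝ) → Fin 3 → M → ℝ)
    (d_add : ∀ (f g : M → ℝ) k x,
      d (fun y => f y + g y) k x = d f k x + d g k x)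
    (d_mul : ∀ (f g : M → ℝ) k x,
      d (fun y => f y * g y) k x = d f k x * g x + f x * d g k x)
    (d_const : ∀ (c : ℝ) k x, d (fun _ => c) k x = 0)
    (Γ : M → Fin 3 → Fin 3 → Fin 3 → ℝ)
    (hΓ : ∀ x k i m, Γ x k i m = - Γ x k m i)
    (vol_div : ∀ X : M → Fin 3 → ℝ, vol (divg d Γ X) = 0)
    (f : M → ℝ) (Ric : M → Fin 3 → Fin 3 → ℝ) (R : ℝ)
    (hR : ∀ x, (∑ i, Ric x i i) = R)
    (hbianchi : ∀ x i, (∑ j, cov2 d Γ Ric j i j x) = 0)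
    (hCPE : ∀ x i j,
      -(∑ k, hess d Γ f k k x) * kd i j + hess d Γ f i j x - f x * Ric x i j
        = Ric x i j - (R / 3) * kd i j) :
    vol (fun x => (1 + f x) * ∑ i, ∑ j, (Ric x i j - (R / 3) * kd i j) ^ 2)
      = 0 := by
  have hdiv : (fun x => (1 + f x) * ∑ i, ∑ j, (Ric x i j - (R / 3) * kd i j) ^ 2)
      = divg d Γ (fun y j => (∑ i, d f i y * Ric y i j) - R / 3 * d f j y) := by
    funext x
    rw [divg_contract_grad d_add d_mul d_const hΓ, sum_hess_mul_traceless_of_cpe (hR x) (hCPE x)]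
    simp [hbianchi]
  rw [hdiv, vol_div]

/-- Step in the proof of Theorem 1.1: on a closed oriented 3-manifold, a
solution `f̃` of the CPE equation `−(Δf̃)g + Hess f̃ − f̃ Ric = Ric − (R/3)g`
satisfies `∫_M (1+f̃)|Ric − (R/3)g|² dV = 0`.

The closed manifold is modelled by a point set `M`, a volume integral `vol`
(additive, homogeneous, and annihilating divergences — the divergence
theorem on a closed manifold), a local orthonormal frame derivation `d` with
metric connection coefficients `Γ`.  `hbianchi` is the contracted second
Bianchi identity `∑_j R_{ij,j} = (1/2)R_{,i} = 0` for the constant scalar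
curvature `R`. -/
theorem stmt_16 {M : Type*}
    (vol : (M → ℝ) → ℝ)
    (vol_add : ∀ g h : M → ℝ, (vol fun x => g x + h x) = vol g + vol h)
    (vol_smul : ∀ (c : ℝ) (g : M → ℝ), (vol fun x => c * g x) = c * vol g)
    (d : (M → ℝ) → Fin 3 → M → ℝ)
    (d_add : ∀ (f g : M → ℝ) k x,
      d (fun y => f y + g y) k x = d f k x + d g k x)
    (d_mul : ∀ (f g : M → ℝ) k x,
      d (fun y => f y * g y) k x = d f k x * g x + f x * d g k x)
    (d_const : ∀ (c : ℝ) k x, d (fun _ => c) k x = 0)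
    (Γ : M → Fin 3 → Fin 3 → Fin 3 → ℝ)
    (hΓ : ∀ x k i m, Γ x k i m = - Γ x k m i)
    (vol_div : ∀ X : M → Fin 3 → ℝ, vol (divg d Γ X) = 0)
    (f : M → ℝ) (Ric : M → Fin 3 → Fin 3 → ℝ) (R : ℝ)
    (hsymm : ∀ x i j, Ric x i j = Ric x j i)
    (hR : ∀ x, (∑ i, Ric x i i) = R)
    (hbianchi : ∀ x i, (∑ j, cov2 d Γ Ric j i j x) = 0)
    (hCPE : ∀ x i j,
      -(∑ k, hess d Γ f k k x) * kd i j + hess d Γ f i j x - f x * Ric x i j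
        = Ric x i j - (R / 3) * kd i j) :
    vol (fun x => (1 + f x) * ∑ i, ∑ j, (Ric x i j - (R / 3) * kd i j) ^ 2)
      = 0 :=
  stmt_16_general vol d d_add d_mul d_const Γ hΓ vol_div f Ric R hR hbianchi hCPE
end
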